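/- arXiv:1207.2012 — 4 statements merged into one kernel-verified Lean document; each statement's English description precedes it below -/
import Mathlib

section
/- For every ν ∈ (1,2), every integer N ≥ 2, every 1 ≤ i ≤ N-1 and every 0 ≤ m ≤ N: g^{ν,N}_{i,i} < 0 and g^{ν,N}_{i,m} > 0 whenever m ≠ i. (Lemma 3.2, part (1).) -/
/-- The coefficients `a^ν_{j,m}` of the second-order discretization of the left
Riemann–Liouville fractional derivative. All powers are real powers. -/
noncomputable def aCoef (ν : ℝ) (j m : ℕ) : ℝ :=
  if m = j then 1
  else if m = 0 then ((j : ℝ) - 1) ^ (3 - ν) - (j : ℝ) ^ (2 - ν) * ((j : ℝ) - 3 + ν)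
  else ((j : ℝ) - (m : ℝ) + 1) ^ (3 - ν) - 2 * ((j : ℝ) - (m : ℝ)) ^ (3 - ν)
    + ((j : ℝ) - (m : ℝ) - 1) ^ (3 - ν)

/-- The coefficients `b^ν_{j,m}` of the second-order discretization of the right
Riemann–Liouville fractional derivative on a grid with `N` subintervals. -/
noncomputable def bCoef (ν : ℝ) (N j m : ℕ) : ℝ :=
  if m = j then 1
  else if m = N then (3 - ν - (N : ℝ) + (j : ℝ)) * ((N : ℝ) - (j : ℝ)) ^ (2 - ν)
    + ((N : ℝ) - (j : ℝ) - 1) ^ (3 - ν)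
  else ((m : ℝ) - (j : ℝ) + 1) ^ (3 - ν) - 2 * ((m : ℝ) - (j : ℝ)) ^ (3 - ν)
    + ((m : ℝ) - (j : ℝ) - 1) ^ (3 - ν)

/-- The coefficients `p^ν_{i,m}` (left-derivative part), for `1 ≤ i ≤ N-1`. -/
noncomputable def pCoef (ν : ℝ) (i m : ℕ) : ℝ :=
  if m < i then aCoef ν (i - 1) m - 2 * aCoef ν i m + aCoef ν (i + 1) m
  else if m = i then -2 * aCoef ν i i + aCoef ν (i + 1) i
  else if m = i + 1 then aCoef ν (i + 1) (i + 1)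
  else 0

/-- The coefficients `q^ν_{i,m}` (right-derivative part), for `1 ≤ i ≤ N-1`. -/
noncomputable def qCoef (ν : ℝ) (N i m : ℕ) : ℝ :=
  if m + 1 < i then 0
  else if m + 1 = i then bCoef ν N (i - 1) (i - 1)
  else if m = i then -2 * bCoef ν N i i + bCoef ν N (i - 1) i
  else bCoef ν N (i - 1) m - 2 * bCoef ν N i m + bCoef ν N (i + 1) m

/-- The Riesz-derivative difference coefficients `g^{ν,N}_{i,m} = p^ν_{i,m} + q^ν_{i,m}`. -/
noncomputable def gCoef (ν : ℝ) (N i m : ℕ) : ℝ := pCoef ν i m + qCoef ν N i m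

/-- The L1 coefficients `l_s = (s+1)^(1-γ) - s^(1-γ)` of the Caputo discretization. -/
noncomputable def lCoef (γ : ℝ) (s : ℕ) : ℝ := ((s : ℝ) + 1) ^ (1 - γ) - (s : ℝ) ^ (1 - γ)

/-- The Riesz constant `κ_ν = 1 / (2 cos(νπ/2))`. -/
noncomputable def kappa (ν : ℝ) : ℝ := 1 / (2 * Real.cos (ν * Real.pi / 2))

/-- The maximum of `|v i|` over `0 ≤ i ≤ N`. -/
noncomputable def maxAbs (N : ℕ) (v : ℕ → ℝ) : ℝ :=
  (Finset.range (N + 1)).sup' Finset.nonempty_range_add_one fun i => |v i|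

/-- The maximum of `|v i j|` over `0 ≤ i ≤ Nx`, `0 ≤ j ≤ Ny`. -/
noncomputable def maxAbs2 (Nx Ny : ℕ) (v : ℕ → ℕ → ℝ) : ℝ :=
  ((Finset.range (Nx + 1)) ×ˢ (Finset.range (Ny + 1))).sup'
    (Finset.nonempty_range_add_one.product Finset.nonempty_range_add_one) fun p => |v p.1 p.2|

/-!
Write `s = 3 - ν ∈ (1, 2)`. For `1 ≤ m < j`, `a_{j,m} = W (j - m)` with
`W x = (x + 1) ^ s - 2 x ^ s + (x - 1) ^ s` the second difference of `t ^ s`, and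
`a_{j,0} = A j` with `A x = (x - 1) ^ s - x ^ s + s x ^ (s - 1)` the gap at `x - 1` between `t ^ s`
and its tangent at `x`. Reflecting the grid, `j ↦ N - j`, turns `b` into `a` and `q` into `p`, so
`g_{i,m} = p_{i,m} + p_{N-i,N-m}`.

Away from the diagonal `p_{i,m}` is a second difference of `W` or of `A`, which is positive since
both are strictly convex on `[1, ∞)`: their second derivatives are `s (s - 1)` times a second
difference, resp. a tangent gap, of the strictly convex `t ^ (s - 2)`. Next to the diagonal
everything is explicit: `g_{i,i} = 2 (2 ^ s - 4) < 0`, and the off-diagonal neighbours reduce to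
`3 ^ s - 4 * 2 ^ s + 7`, which decreases in `s` and vanishes at `s = 2`, or to
`(ν - 1) (2 - 2 ^ (2 - ν)) + 1`.
-/

open Real Set Topology

def secondDiff (f : ℝ → ℝ) (x : ℝ) : ℝ := f (x - 1) - 2 * f x + f (x + 1)

def tangentGap (f f' : ℝ → ℝ) (x : ℝ) : ℝ := f (x - 1) - f x + f' x

theorem HasDerivAt.secondDiff {f f' : ℝ → ℝ} {x : ℝ}
    (hl : HasDerivAt f (f' (x - 1)) (x - 1)) (h₀ : HasDerivAt f (f' x) x)
    (hr : HasDerivAt f (f' (x + 1)) (x + 1)) :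
    HasDerivAt (secondDiff f) (secondDiff f' x) x :=
  ((hl.comp_sub_const x 1).sub (h₀.const_mul 2)).add (hr.comp_add_const x 1)

theorem HasDerivAt.tangentGap {f f' f'' : ℝ → ℝ} {x : ℝ}
    (hl : HasDerivAt f (f' (x - 1)) (x - 1)) (h₀ : HasDerivAt f (f' x) x)
    (h' : HasDerivAt f' (f'' x) x) :
    HasDerivAt (tangentGap f f') (tangentGap f' f'' x) x :=
  ((hl.comp_sub_const x 1).sub h₀).add h'

theorem StrictConvexOn.secondDiff_pos {S : Set ℝ} {f : ℝ → ℝ} (hf : StrictConvexOn ℝ S f)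
    {x : ℝ} (hl : x - 1 ∈ S) (hr : x + 1 ∈ S) : 0 < secondDiff f x := by
  have h := hf.2 hl hr (by linarith : x - 1 ≠ x + 1) one_half_pos one_half_pos (add_halves 1)
  simp only [smul_eq_mul] at h
  rw [show 1 / 2 * (x - 1) + 1 / 2 * (x + 1) = x by ring] at h
  unfold secondDiff
  linarith

theorem StrictConvexOn.tangentGap_pos {S : Set ℝ} {f f' : ℝ → ℝ} (hf : StrictConvexOn ℝ S f)
    {x : ℝ} (hl : x - 1 ∈ S) (h₀ : x ∈ S) (hd : HasDerivAt f (f' x) x) :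
    0 < tangentGap f f' x := by
  have h := hf.slope_lt_of_hasDerivAt hl h₀ (sub_one_lt x) hd
  rw [slope_def_field, sub_sub_cancel, div_one] at h
  unfold tangentGap
  linarith

theorem strictConvexOn_of_hasDerivAt2_pos {D : Set ℝ} (hD : Convex ℝ D) {f f' f'' : ℝ → ℝ}
    (hf : ContinuousOn f D) (hf' : ∀ x ∈ interior D, HasDerivAt f (f' x) x)
    (hf'' : ∀ x ∈ interior D, HasDerivAt f' (f'' x) x) (hpos : ∀ x ∈ interior D, 0 < f'' x) :
    StrictConvexOn ℝ D f := by
  refine strictConvexOn_of_deriv2_pos hD hf fun x hx => ?_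
  have h : deriv f =ᶠ[𝓝 x] f' := by
    filter_upwards [isOpen_interior.mem_nhds hx] with y hy using (hf' y hy).deriv
  rw [Function.iterate_succ_apply, Function.iterate_one, h.deriv_eq, (hf'' x hx).deriv]
  exact hpos x hx

theorem hasDerivAt_const_mul_rpow (c p : ℝ) {x : ℝ} (hx : 0 < x) :
    HasDerivAt (fun t => c * t ^ p) (c * p * x ^ (p - 1)) x := by
  simpa only [mul_assoc] using (hasDerivAt_rpow_const (Or.inl hx.ne')).const_mul c

theorem strictConvexOn_rpow_of_neg {p : ℝ} (hp : p < 0) :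
    StrictConvexOn ℝ (Ioi 0) fun x : ℝ => x ^ p := by
  refine strictConvexOn_of_hasDerivAt2_pos (convex_Ioi 0)
    (f' := fun x => p * x ^ (p - 1)) (f'' := fun x => p * (p - 1) * x ^ (p - 1 - 1))
    (fun x hx => (hasDerivAt_rpow_const (Or.inl (ne_of_gt hx))).continuousAt.continuousWithinAt)
    ?_ ?_ ?_ <;> simp only [interior_Ioi, mem_Ioi]
  · exact fun x hx => hasDerivAt_rpow_const (Or.inl hx.ne')
  · exact fun x hx => hasDerivAt_const_mul_rpow p (p - 1) hx
  · intro x hx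
    have := mul_pos_of_neg_of_neg hp (by linarith : p - 1 < 0)
    positivity

theorem strictConvexOn_secondDiff_rpow {s : ℝ} (hs₁ : 1 < s) (hs₂ : s < 2) :
    StrictConvexOn ℝ (Ici 1) (secondDiff fun t => t ^ s) := by
  have hc : Continuous fun t : ℝ => t ^ s := continuous_rpow_const (by linarith)
  refine strictConvexOn_of_hasDerivAt2_pos (convex_Ici 1)
    (f' := secondDiff fun t => s * t ^ (s - 1))
    (f'' := secondDiff fun t => s * (s - 1) * t ^ (s - 1 - 1))
    (by unfold secondDiff; fun_prop) ?_ ?_ ?_ <;> simp only [interior_Ici, mem_Ioi]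
  · exact fun x hx => HasDerivAt.secondDiff (hasDerivAt_rpow_const (Or.inl (by linarith)))
      (hasDerivAt_rpow_const (Or.inl (by linarith))) (hasDerivAt_rpow_const (Or.inl (by linarith)))
  · exact fun x hx => HasDerivAt.secondDiff (hasDerivAt_const_mul_rpow _ _ (by linarith))
      (hasDerivAt_const_mul_rpow _ _ (by linarith)) (hasDerivAt_const_mul_rpow _ _ (by linarith))
  · intro x hx
    have h := (strictConvexOn_rpow_of_neg (by linarith : s - 1 - 1 < 0)).secondDiff_pos
      (x := x) (mem_Ioi.2 (by linarith)) (mem_Ioi.2 (by linarith))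
    have hs : 0 < s * (s - 1) := by nlinarith
    calc 0 < s * (s - 1) * secondDiff (fun t => t ^ (s - 1 - 1)) x := mul_pos hs h
      _ = _ := by simp only [secondDiff]; ring

theorem strictConvexOn_tangentGap_rpow {s : ℝ} (hs₁ : 1 < s) (hs₂ : s < 2) :
    StrictConvexOn ℝ (Ici 1) (tangentGap (fun t => t ^ s) fun t => s * t ^ (s - 1)) := by
  have hc₀ : Continuous fun t : ℝ => t ^ s := continuous_rpow_const (by linarith)
  have hc₁ : Continuous fun t : ℝ => t ^ (s - 1) := continuous_rpow_const (by linarith)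
  refine strictConvexOn_of_hasDerivAt2_pos (convex_Ici 1)
    (f' := tangentGap (fun t => s * t ^ (s - 1)) fun t => s * (s - 1) * t ^ (s - 1 - 1))
    (f'' := tangentGap (fun t => s * (s - 1) * t ^ (s - 1 - 1))
      fun t => s * (s - 1) * (s - 1 - 1) * t ^ (s - 1 - 1 - 1))
    (by unfold tangentGap; fun_prop) ?_ ?_ ?_ <;> simp only [interior_Ici, mem_Ioi]
  · exact fun x hx => HasDerivAt.tangentGap (hasDerivAt_rpow_const (Or.inl (by linarith)))
      (hasDerivAt_rpow_const (Or.inl (by linarith))) (hasDerivAt_const_mul_rpow _ _ (by linarith))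
  · exact fun x hx => HasDerivAt.tangentGap (hasDerivAt_const_mul_rpow _ _ (by linarith))
      (hasDerivAt_const_mul_rpow _ _ (by linarith)) (hasDerivAt_const_mul_rpow _ _ (by linarith))
  · intro x hx
    have h := (strictConvexOn_rpow_of_neg (by linarith : s - 1 - 1 < 0)).tangentGap_pos
      (f' := fun t => (s - 1 - 1) * t ^ (s - 1 - 1 - 1))
      (mem_Ioi.2 (by linarith)) (mem_Ioi.2 (by linarith))
      (hasDerivAt_rpow_const (x := x) (Or.inl (by linarith)))
    have hs : 0 < s * (s - 1) := by nlinarith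
    calc 0 < s * (s - 1) * tangentGap (fun t => t ^ (s - 1 - 1))
          (fun t => (s - 1 - 1) * t ^ (s - 1 - 1 - 1)) x := mul_pos hs h
      _ = _ := by simp only [tangentGap]; ring

theorem three_rpow_sub_four_mul_two_rpow_add_seven_pos {s : ℝ} (hs : s < 2) :
    0 < (3 : ℝ) ^ s - 4 * 2 ^ s + 7 := by
  have hlog : 9 * log 3 < 16 * log 2 := by
    have := log_lt_log (by norm_num) (by norm_num : (3 : ℝ) ^ 9 < 2 ^ 16)
    rwa [log_pow, log_pow, Nat.cast_ofNat, Nat.cast_ofNat] at this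
  have hanti : StrictAntiOn (fun t : ℝ => (3 : ℝ) ^ t - 4 * 2 ^ t + 7) (Iic 2) := by
    refine strictAntiOn_of_hasDerivWithinAt_neg (convex_Iic 2)
      (f' := fun t => 3 ^ t * log 3 - 4 * (2 ^ t * log 2)) (by
        have : Continuous fun t : ℝ => (3 : ℝ) ^ t - 4 * 2 ^ t + 7 := by
          fun_prop (disch := norm_num)
        exact this.continuousOn)
      (fun t _ => (((hasStrictDerivAt_const_rpow (by norm_num) t).hasDerivAt.sub
        ((hasStrictDerivAt_const_rpow (by norm_num) t).hasDerivAt.const_mul 4)).add_const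
          7).hasDerivWithinAt) fun t ht => ?_
    rw [interior_Iic, mem_Iio] at ht
    have h32 : (3 / 2 : ℝ) ^ t < 9 / 4 := by
      have := rpow_lt_rpow_of_exponent_lt (by norm_num : (1 : ℝ) < 3 / 2) ht
      rw [rpow_two] at this; norm_num at this; exact this
    have h2 : (0 : ℝ) < 2 ^ t := rpow_pos_of_pos two_pos t
    have h3 : (3 : ℝ) ^ t = (3 / 2) ^ t * 2 ^ t := by
      rw [← mul_rpow (by norm_num) (by norm_num)]; norm_num
    have hl3 : 0 < log 3 := log_pos (by norm_num)
    rw [h3]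
    -- `(3/2) ^ t * 2 ^ t * log 3 < 9/4 * 2 ^ t * log 3 < 4 * 2 ^ t * log 2`
    nlinarith [mul_lt_mul_of_pos_right h32 (mul_pos h2 hl3)]
  have h := hanti (mem_Iic.2 hs.le) (mem_Iic.2 le_rfl) hs
  norm_num at h
  linarith

theorem aCoef_self (ν : ℝ) (j : ℕ) : aCoef ν j j = 1 := if_pos rfl

theorem bCoef_self (ν : ℝ) (N j : ℕ) : bCoef ν N j j = 1 := if_pos rfl

theorem aCoef_eq_secondDiff (ν : ℝ) {j m : ℕ} (hm : 1 ≤ m) (hmj : m < j) :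
    aCoef ν j m = secondDiff (fun t => t ^ (3 - ν)) ((j : ℝ) - m) := by
  rw [aCoef, if_neg hmj.ne, if_neg (by omega), secondDiff]
  ring

theorem aCoef_zero_eq_tangentGap (ν : ℝ) {j : ℕ} (hj : 1 ≤ j) :
    aCoef ν j 0 = tangentGap (fun t => t ^ (3 - ν)) (fun t => (3 - ν) * t ^ (3 - ν - 1)) j := by
  have hj' : (j : ℝ) ≠ 0 := by positivity
  rw [aCoef, if_neg (by omega), if_pos rfl, tangentGap, show (3 : ℝ) - ν = 2 - ν + 1 by ring,
    rpow_add_one hj', add_sub_cancel_right]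
  ring

theorem bCoef_eq_aCoef (ν : ℝ) {N j m : ℕ} (hjm : j ≤ m) (hmN : m ≤ N) :
    bCoef ν N j m = aCoef ν (N - j) (N - m) := by
  rcases hjm.eq_or_lt with rfl | hjm
  · rw [aCoef_self, bCoef_self]
  rcases hmN.eq_or_lt with rfl | hmN
  · rw [bCoef, aCoef, if_neg hjm.ne', if_pos rfl, Nat.sub_self, if_neg (by omega), if_pos rfl,
      Nat.cast_sub hjm.le]
    ring
  · rw [bCoef, aCoef, if_neg hjm.ne', if_neg hmN.ne, if_neg (by omega), if_neg (by omega),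
      Nat.cast_sub (hjm.le.trans hmN.le), Nat.cast_sub hmN.le,
      show (N : ℝ) - j - (N - m) = m - j by ring]

theorem qCoef_eq_pCoef (ν : ℝ) {N i m : ℕ} (hi : 1 ≤ i) (hiN : i ≤ N) (hmN : m ≤ N) :
    qCoef ν N i m = pCoef ν (N - i) (N - m) := by
  rcases lt_trichotomy (m + 1) i with h | h | h
  · rw [qCoef, if_pos h, pCoef, if_neg (by omega), if_neg (by omega), if_neg (by omega)]
  · rw [qCoef, if_neg (by omega), if_pos h, pCoef, if_neg (by omega), if_neg (by omega),
      if_pos (by omega), aCoef_self, bCoef_self]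
  rcases (show m = i ∨ i < m by omega) with rfl | h
  · rw [qCoef, if_neg (by omega), if_neg (by omega), if_pos rfl, pCoef, if_neg (by omega),
      if_pos rfl, bCoef_self, aCoef_self, bCoef_eq_aCoef ν (by omega) hmN,
      show N - (m - 1) = N - m + 1 by omega]
  · rw [qCoef, if_neg (by omega), if_neg (by omega), if_neg (by omega), pCoef, if_pos (by omega),
      bCoef_eq_aCoef ν (by omega) hmN, bCoef_eq_aCoef ν (by omega) hmN,
      bCoef_eq_aCoef ν (by omega) hmN, show N - (i - 1) = N - i + 1 by omega,
      show N - (i + 1) = N - i - 1 by omega]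
    ring

theorem secondDiff_rpow_one {s : ℝ} (hs : s ≠ 0) : secondDiff (fun t => t ^ s) 1 = 2 ^ s - 2 := by
  norm_num [secondDiff, zero_rpow hs]
  ring

theorem secondDiff_rpow_two (s : ℝ) : secondDiff (fun t => t ^ s) 2 = 3 ^ s - 2 * 2 ^ s + 1 := by
  norm_num [secondDiff]
  ring

theorem pCoef_self_succ (ν : ℝ) (i : ℕ) : pCoef ν i (i + 1) = 1 := by
  rw [pCoef, if_neg (by omega), if_neg (by omega), if_pos rfl, aCoef_self]

theorem pCoef_eq_zero (ν : ℝ) {i m : ℕ} (h : i + 1 < m) : pCoef ν i m = 0 := by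
  rw [pCoef, if_neg (by omega), if_neg (by omega), if_neg (by omega)]

section pCoef

variable {ν : ℝ}

theorem pCoef_self_neg (hν₁ : 1 < ν) (hν₃ : ν ≠ 3) {i : ℕ} (hi : 1 ≤ i) : pCoef ν i i < 0 := by
  rw [pCoef, if_neg (lt_irrefl i), if_pos rfl, aCoef_self,
    aCoef_eq_secondDiff ν hi (Nat.lt_succ_self i), Nat.cast_succ, add_sub_cancel_left,
    secondDiff_rpow_one (sub_ne_zero.2 hν₃.symm)]
  have : (2 : ℝ) ^ (3 - ν) < 2 ^ (2 : ℝ) := rpow_lt_rpow_of_exponent_lt one_lt_two (by linarith)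
  norm_num at this
  linarith

theorem pCoef_succ_self_add_one_pos (hν₁ : 1 < ν) (hν₃ : ν ≠ 3) (m : ℕ) :
    0 < pCoef ν (m + 1) m + 1 := by
  rw [pCoef, if_pos (Nat.lt_succ_self m), Nat.add_sub_cancel, aCoef_self]
  rcases Nat.eq_zero_or_pos m with rfl | hm
  · -- `p_{1,0} = (ν - 1) (2 - 2 ^ (2 - ν))`
    have : (2 : ℝ) ^ (2 - ν) < 2 ^ (1 : ℝ) := rpow_lt_rpow_of_exponent_lt one_lt_two (by linarith)
    norm_num [aCoef, zero_rpow (sub_ne_zero.2 hν₃.symm)] at this ⊢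
    nlinarith
  · rw [aCoef_eq_secondDiff ν hm (by omega), aCoef_eq_secondDiff ν hm (by omega),
      show ((m + 1 : ℕ) : ℝ) - m = 1 by push_cast; ring,
      show ((m + 1 + 1 : ℕ) : ℝ) - m = 2 by push_cast; ring,
      secondDiff_rpow_one (sub_ne_zero.2 hν₃.symm), secondDiff_rpow_two]
    linarith [three_rpow_sub_four_mul_two_rpow_add_seven_pos (s := 3 - ν) (by linarith)]

theorem pCoef_pos (hν₁ : 1 < ν) (hν₂ : ν < 2) {i m : ℕ} (h : m + 2 ≤ i) : 0 < pCoef ν i m := by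
  have hs₁ : 1 < 3 - ν := by linarith
  have hs₂ : 3 - ν < 2 := by linarith
  have hi : (m : ℝ) + 2 ≤ i := by exact_mod_cast h
  rw [pCoef, if_pos (by omega)]
  rcases Nat.eq_zero_or_pos m with rfl | hm
  · rw [aCoef_zero_eq_tangentGap ν (by omega), aCoef_zero_eq_tangentGap ν (by omega),
      aCoef_zero_eq_tangentGap ν (by omega), Nat.cast_sub (show 1 ≤ i by omega), Nat.cast_one,
      Nat.cast_add_one]
    exact (strictConvexOn_tangentGap_rpow hs₁ hs₂).secondDiff_pos
      (mem_Ici.2 (by linarith)) (mem_Ici.2 (by linarith))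
  · rw [aCoef_eq_secondDiff ν hm (by omega), aCoef_eq_secondDiff ν hm (by omega),
      aCoef_eq_secondDiff ν hm (by omega), Nat.cast_sub (show 1 ≤ i by omega), Nat.cast_one,
      Nat.cast_add_one, sub_right_comm, add_sub_right_comm]
    exact (strictConvexOn_secondDiff_rpow hs₁ hs₂).secondDiff_pos
      (mem_Ici.2 (by linarith)) (mem_Ici.2 (by linarith))

theorem pCoef_add_pCoef_pos (hν₁ : 1 < ν) (hν₂ : ν < 2) {i m : ℕ} (hmi : m < i) (k : ℕ) :
    0 < pCoef ν i m + pCoef ν k (k + (i - m)) := by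
  rcases (show i = m + 1 ∨ m + 2 ≤ i by omega) with rfl | h
  · rw [Nat.add_sub_cancel_left, pCoef_self_succ]
    exact pCoef_succ_self_add_one_pos hν₁ (by linarith) m
  · rw [pCoef_eq_zero ν (i := k) (by omega), add_zero]
    exact pCoef_pos hν₁ hν₂ h

end pCoef

theorem gCoef_eq_pCoef_add_pCoef (ν : ℝ) {N i m : ℕ} (hi : 1 ≤ i) (hiN : i ≤ N) (hmN : m ≤ N) :
    gCoef ν N i m = pCoef ν i m + pCoef ν (N - i) (N - m) := by
  rw [gCoef, qCoef_eq_pCoef ν hi hiN hmN]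

theorem gCoef_diag_neg_offdiag_pos_general (ν : ℝ) (hν : ν ∈ Set.Ioo (1:ℝ) 2)
    (N : ℕ) (i : ℕ) (hi1 : 1 ≤ i) (hi2 : i ≤ N - 1) :
    gCoef ν N i i < 0 ∧ ∀ m : ℕ, m ≤ N → m ≠ i → 0 < gCoef ν N i m := by
  obtain ⟨hν₁, hν₂⟩ := hν
  refine ⟨?_, fun m hm hmi => ?_⟩
  · rw [gCoef_eq_pCoef_add_pCoef ν hi1 (by omega) (by omega)]
    linarith [pCoef_self_neg hν₁ (by linarith) hi1,
      pCoef_self_neg (i := N - i) hν₁ (by linarith) (by omega)]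
  rw [gCoef_eq_pCoef_add_pCoef ν hi1 (by omega) hm]
  rcases hmi.lt_or_gt with h | h
  · rw [show N - m = N - i + (i - m) by omega]
    exact pCoef_add_pCoef_pos hν₁ hν₂ h (N - i)
  · have := pCoef_add_pCoef_pos hν₁ hν₂ (show N - m < N - i by omega) i
    rwa [show i + (N - i - (N - m)) = m by omega, add_comm] at this

/-- Lemma 3.2, part (1): for `ν ∈ (1,2)`, the diagonal Riesz coefficient is negative and
all off-diagonal coefficients are positive. -/
theorem gCoef_diag_neg_offdiag_pos (ν : ℝ) (hν : ν ∈ Set.Ioo (1:ℝ) 2)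
    (N : ℕ) (hN : 2 ≤ N) (i : ℕ) (hi1 : 1 ≤ i) (hi2 : i ≤ N - 1) :
    gCoef ν N i i < 0 ∧ ∀ m : ℕ, m ≤ N → m ≠ i → 0 < gCoef ν N i m :=
  gCoef_diag_neg_offdiag_pos_general ν hν N i hi1 hi2
end

section
/- For every ν ∈ (1,2) and every integer j ≥ 1: (j-1)^{3-ν} + (3-ν-j)·j^{2-ν} > 0. (Positivity of the boundary coefficients a^{ν}_{j,0} = (j-1)^{3-ν} - j^{2-ν}(j-3+ν) of the second-order Riemann–Liouville discretization.) -/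
/-- Positivity of the boundary coefficients of the second-order Riemann–Liouville
discretization: for `ν ∈ (1,2)` and every integer `j ≥ 1`,
`(j-1)^(3-ν) + (3-ν-j) j^(2-ν) > 0`. -/
theorem boundary_coef_pos (ν : ℝ) (hν : ν ∈ Set.Ioo (1:ℝ) 2) (j : ℕ) (hj : 1 ≤ j) :
    0 < ((j : ℝ) - 1) ^ (3 - ν) + (3 - ν - (j : ℝ)) * (j : ℝ) ^ (2 - ν) := by
  obtain ⟨hν1, hν2⟩ := hν
  set x : ℝ := (j : ℝ) with hxdef
  have hx : 1 ≤ x := Nat.one_le_cast.mpr hj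
  have hx0 : 0 < x := lt_of_lt_of_le one_pos hx
  set p : ℝ := 3 - ν with hp
  have hp1 : 1 < p := by simp only [hp]; linarith
  have hs : -1 ≤ -1/x := by
    rw [neg_div, neg_le_neg_iff]
    exact div_le_one_of_le₀ hx hx0.le
  have hs' : -1/x ≠ 0 := by
    rw [neg_div]
    exact neg_ne_zero.mpr (one_div_ne_zero hx0.ne')
  have hb := one_add_mul_self_lt_rpow_one_add hs hs' hp1
  have hxp : (0:ℝ) < x ^ p := Real.rpow_pos_of_pos hx0 p
  have hmul := (mul_lt_mul_iff_right₀ hxp).mpr hb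
  have hinv : 1/x ≤ 1 := div_le_one_of_le₀ hx hx0.le
  have hnn : 0 ≤ 1 + -1/x := by rw [neg_div, ← sub_eq_add_neg]; linarith
  have h1 : x ^ p * (1 + -1/x) ^ p = (x - 1) ^ p := by
    rw [← Real.mul_rpow hx0.le hnn]
    congr 1
    field_simp
    ring
  have h2 : x ^ p * (1 + p * (-1/x)) = (x - p) * x ^ (p - 1) := by
    rw [Real.rpow_sub_one hx0.ne']
    field_simp
    ring
  rw [h1, h2] at hmul
  have hrw : (j:ℝ) ^ (2 - ν) = x ^ (p - 1) := by
    rw [← hxdef, hp]; ring_nf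
  rw [hrw]
  have h3 : (3 - ν - x) = p - x := by rw [hp]
  rw [h3]
  have h4 : (p - x) * x ^ (p - 1) = -((x - p) * x ^ (p - 1)) := by ring
  rw [h4]
  linarith
end

section
/- Let ν ∈ (1,2) and define φ(j) = (j-1)^{3-ν} + (3-ν-j)·j^{2-ν} for integers j ≥ 1. Then for every integer j ≥ 2: φ(j-1) - 2·φ(j) + φ(j+1) > 0. (Positivity of the second differences of the boundary-column coefficients a^{ν}_{j,0}; this gives p^{ν}_{i,0} > 0 for i ≥ 3 and, by symmetry, q^{ν}_{i,N} > 0, as used in Lemma 3.2.) -/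
/-!
With `α = 3 - ν ∈ (1, 2)` we have `φ j = f j` for `f x = (x - 1) ^ α + (α - x) * x ^ (α - 1)`, so it
suffices that `f` is strictly convex on `[1, ∞)`. Writing `g_q x = (x - 1) ^ q - x ^ q + q * x ^ (q - 1)`
for the gap between `t ^ q` and its tangent line at `x`, evaluated at `t = x - 1`, one computes
`f' = α * g_(α-1)` and `g_q' = q * g_(q-1)`, hence `f'' = α (α - 1) g_(α-2)`. For a negative
exponent `t ^ q` is strictly convex, so `g_(α-2) > 0`.
-/

open Real Set

noncomputable section

def rpowTangentGap (q x : ℝ) : ℝ := (x - 1) ^ q - x ^ q + q * x ^ (q - 1)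

def boundaryCoef (α x : ℝ) : ℝ := (x - 1) ^ α + (α - x) * x ^ (α - 1)

end

theorem rpowTangentGap_pos {p x : ℝ} (hp : p < 0) (hx : 1 < x) : 0 < rpowTangentGap p x := by
  have hx0 : 0 < x - 1 := by linarith
  obtain ⟨c, ⟨hc₁, hc₂⟩, hslope⟩ :=
    exists_hasDerivAt_eq_slope (fun t ↦ t ^ p) (fun t ↦ p * t ^ (p - 1)) (sub_one_lt x)
      (continuousOn_id.rpow_const fun t ht ↦ Or.inl (show (0 : ℝ) < t by linarith [ht.1]).ne')
      (fun t ht ↦ hasDerivAt_rpow_const (Or.inl (show (0 : ℝ) < t by linarith [ht.1]).ne'))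
  rw [sub_sub_cancel, div_one] at hslope
  have hderiv_lt : x ^ (p - 1) < c ^ (p - 1) :=
    rpow_lt_rpow_of_neg (hx0.trans hc₁) hc₂ (by linarith)
  have := mul_lt_mul_of_neg_left hderiv_lt hp
  unfold rpowTangentGap
  linarith

theorem hasDerivAt_rpowTangentGap (q : ℝ) {x : ℝ} (hx : 1 < x) :
    HasDerivAt (rpowTangentGap q) (q * rpowTangentGap (q - 1) x) x := by
  have hshift := ((hasDerivAt_id x).sub_const 1).rpow_const (p := q)
    (Or.inl (sub_ne_zero.2 hx.ne'))
  have hpow := hasDerivAt_rpow_const (p := q) (Or.inl (by positivity : x ≠ 0))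
  have hlower := (hasDerivAt_rpow_const (p := q - 1) (Or.inl (by positivity : x ≠ 0))).const_mul q
  refine ((hshift.sub hpow).add hlower).congr_deriv ?_
  simp only [rpowTangentGap, id]
  ring

theorem strictMonoOn_rpowTangentGap {q : ℝ} (hq₀ : 0 < q) (hq₁ : q < 1) :
    StrictMonoOn (rpowTangentGap q) (Ioi 1) := by
  refine strictMonoOn_of_deriv_pos (convex_Ioi 1)
    (fun x hx ↦ (hasDerivAt_rpowTangentGap q hx).continuousAt.continuousWithinAt) ?_
  rw [interior_Ioi]
  intro x hx
  rw [(hasDerivAt_rpowTangentGap q hx).deriv]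
  exact mul_pos hq₀ (rpowTangentGap_pos (by linarith) hx)

theorem hasDerivAt_boundaryCoef (α : ℝ) {x : ℝ} (hx : 1 < x) :
    HasDerivAt (boundaryCoef α) (α * rpowTangentGap (α - 1) x) x := by
  have hx0 : x ≠ 0 := by positivity
  have hshift := ((hasDerivAt_id x).sub_const 1).rpow_const (p := α)
    (Or.inl (sub_ne_zero.2 hx.ne'))
  have hpow := hasDerivAt_rpow_const (p := α - 1) (Or.inl hx0)
  refine (hshift.add (((hasDerivAt_id x).const_sub α).mul hpow)).congr_deriv ?_
  simp only [rpowTangentGap, id, rpow_sub_one hx0 (α - 1)]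
  field_simp
  ring

theorem continuousOn_boundaryCoef {α : ℝ} (hα : 1 ≤ α) : ContinuousOn (boundaryCoef α) (Ici 1) :=
  ((continuousOn_id.sub continuousOn_const).rpow_const fun _ _ ↦ Or.inr (by linarith)).add
    ((continuousOn_const.sub continuousOn_id).mul
      (continuousOn_id.rpow_const fun _ _ ↦ Or.inr (by linarith)))

theorem strictConvexOn_boundaryCoef {α : ℝ} (hα₁ : 1 < α) (hα₂ : α < 2) :
    StrictConvexOn ℝ (Ici 1) (boundaryCoef α) := by
  refine StrictMonoOn.strictConvexOn_of_deriv (convex_Ici 1) (continuousOn_boundaryCoef hα₁.le) ?_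
  rw [interior_Ici]
  intro x hx y hy hxy
  rw [(hasDerivAt_boundaryCoef α hx).deriv, (hasDerivAt_boundaryCoef α hy).deriv]
  exact mul_lt_mul_of_pos_left
    (strictMonoOn_rpowTangentGap (by linarith) (by linarith) hx hy hxy) (by linarith)

theorem StrictConvexOn.second_difference_pos {s : Set ℝ} {f : ℝ → ℝ} (hf : StrictConvexOn ℝ s f)
    {x h : ℝ} (hl : x - h ∈ s) (hr : x + h ∈ s) (hh : h ≠ 0) :
    0 < f (x - h) - 2 * f x + f (x + h) := by
  have hmid := hf.2 hl hr (by intro h'; apply hh; linarith) one_half_pos one_half_pos (add_halves 1)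
  have hx : (1 / 2 : ℝ) • (x - h) + (1 / 2 : ℝ) • (x + h) = x := by
    simp only [smul_eq_mul]
    ring
  rw [hx, smul_eq_mul, smul_eq_mul] at hmid
  linarith

/-- Positivity of the second differences of the boundary-column coefficients:
for `ν ∈ (1,2)` and `φ j = (j-1)^(3-ν) + (3-ν-j) j^(2-ν)` (for `j ≥ 1`), one has
`φ(j-1) - 2 φ(j) + φ(j+1) > 0` for every integer `j ≥ 2`. -/
theorem boundary_coef_second_diff_pos (ν : ℝ) (hν : ν ∈ Set.Ioo (1:ℝ) 2) (φ : ℕ → ℝ)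
    (hφ : ∀ j : ℕ, 1 ≤ j →
      φ j = ((j : ℝ) - 1) ^ (3 - ν) + (3 - ν - (j : ℝ)) * (j : ℝ) ^ (2 - ν)) :
    ∀ j : ℕ, 2 ≤ j → 0 < φ (j - 1) - 2 * φ j + φ (j + 1) := by
  intro j hj
  have hφ_eq : ∀ i : ℕ, 1 ≤ i → φ i = boundaryCoef (3 - ν) i := by
    intro i hi
    rw [hφ i hi, boundaryCoef, show 3 - ν - 1 = 2 - ν by ring]
  have hj' : (2 : ℝ) ≤ j := by exact_mod_cast hj
  have hconvex := strictConvexOn_boundaryCoef (α := 3 - ν) (by linarith [hν.2]) (by linarith [hν.1])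
  have hpos := hconvex.second_difference_pos (x := j) (h := 1)
    (by rw [mem_Ici]; linarith) (by rw [mem_Ici]; linarith) one_ne_zero
  rw [hφ_eq (j - 1) (by omega), hφ_eq j (by omega), hφ_eq (j + 1) (by omega)]
  push_cast [Nat.cast_sub (by omega : 1 ≤ j)]
  exact hpos
end

section
/- (Theorem 3.5, case 0 < γ < 1: unconditional stability of the two-dimensional implicit scheme.) Let γ ∈ (0,1), α, β ∈ (1,2], integers N_x, N_y ≥ 2 and N_t ≥ 1, reals τ, Δx, Δy > 0, and nonnegative reals c_{i,j,k}, d_{i,j,k} (1 ≤ i ≤ N_x-1, 1 ≤ j ≤ N_y-1, 1 ≤ k ≤ N_t). Set ω'_{i,j,k} = -Γ(2-γ)·τ^γ·κ_α·c_{i,j,k}/(Γ(4-α)·(Δx)^α) ≥ 0 and ω''_{i,j,k} = -Γ(2-γ)·τ^γ·κ_β·d_{i,j,k}/(Γ(4-β)·(Δy)^β) ≥ 0. Suppose real numbers ε^k_{i,j} (0 ≤ i ≤ N_x, 0 ≤ j ≤ N_y, 0 ≤ k ≤ N_t) satisfy ε^k_{i,j} = 0 whenever i ∈ {0, N_x}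 or j ∈ {0, N_y} and 1 ≤ k ≤ N_t, and for all interior (i,j) (1 ≤ i ≤ N_x-1, 1 ≤ j ≤ N_y-1) and 0 ≤ k ≤ N_t - 1: (1 - ω'_{i,j,k+1}·g^{α,N_x}_{i,i} - ω''_{i,j,k+1}·g^{β,N_y}_{j,j})·ε^{k+1}_{i,j} - ω'_{i,j,k+1}·Σ_{m=0, m≠i}^{N_x} g^{α,N_x}_{i,m}·ε^{k+1}_{m,j} - ω''_{i,j,k+1}·Σ_{m=0, m≠j}^{N_y} g^{β,N_y}_{j,m}·ε^{k+1}_{i,m} = Σ_{s=0}^{k-1}(l_s - l_{s+1})·ε^{k-s}_{i,j} + l_k·ε^0_{i,j}. Then for every 0 ≤ k ≤ N_t: max_{i,j} |ε^k_{i,j}| ≤ max_{i,j} |ε^0_{i,j}|. -/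
/-!
A discrete maximum principle. Put `w t = (t+1)^(3-ν) - 2 t^(3-ν) + (t-1)^(3-ν)` for `t ≥ 1`,
`w 0 = 1` and `w t = 0` for `t < 0`; on the interior columns `g^{ν,N}_{i,m}` is the sum of the
second differences of `w` at `i - m` and at `m - i`. As the derivative of `x^(3-ν)` is concave
and its second derivative convex, `w` decreases and is convex on `t ≥ 1`; hence the off-diagonal
interior entries of each row of `g` are nonnegative and, by telescoping, the interior row sums are
nonpositive. Since `κ_ν < 0` the weights `ω', ω''` are nonnegative, so at a point where
`|ε^{k+1}|` is maximal the scheme bounds that maximum by the right-hand side, which is a convex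
combination of earlier levels because `l_s` is nonnegative, decreasing and `l_0 = 1`.
-/

open Set

noncomputable def centralSecondDiff {G : Type*} [Add G] [Sub G] [One G] (f : G → ℝ) (x : G) : ℝ :=
  f (x + 1) - 2 * f x + f (x - 1)

lemma ConvexOn.centralSecondDiff_nonneg {s : Set ℝ} {f : ℝ → ℝ} (hf : ConvexOn ℝ s f) {x : ℝ}
    (hxm : x - 1 ∈ s) (hxp : x + 1 ∈ s) : 0 ≤ centralSecondDiff f x := by
  have h := hf.2 hxm hxp (by norm_num : (0:ℝ) ≤ 1/2) (by norm_num : (0:ℝ) ≤ 1/2) (by norm_num)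
  rw [show (1/2 : ℝ) • (x - 1) + (1/2 : ℝ) • (x + 1) = x by simp only [smul_eq_mul]; ring] at h
  simp only [smul_eq_mul] at h
  unfold centralSecondDiff
  linarith

lemma ConcaveOn.centralSecondDiff_nonpos {s : Set ℝ} {f : ℝ → ℝ} (hf : ConcaveOn ℝ s f) {x : ℝ}
    (hxm : x - 1 ∈ s) (hxp : x + 1 ∈ s) : centralSecondDiff f x ≤ 0 := by
  have h := hf.neg.centralSecondDiff_nonneg hxm hxp
  simp only [centralSecondDiff, Pi.neg_apply] at h ⊢
  linarith

lemma HasDerivAt.centralSecondDiff {f f' : ℝ → ℝ} {x : ℝ}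
    (hxp : HasDerivAt f (f' (x + 1)) (x + 1)) (hx : HasDerivAt f (f' x) x)
    (hxm : HasDerivAt f (f' (x - 1)) (x - 1)) :
    HasDerivAt (centralSecondDiff f) (centralSecondDiff f' x) x :=
  ((hxp.comp_add_const x 1).sub (hx.const_mul 2)).add (hxm.comp_sub_const x 1)

lemma convexOn_rpow_of_nonpos {p : ℝ} (hp : p ≤ 0) : ConvexOn ℝ (Ioi 0) fun x : ℝ ↦ x ^ p := by
  refine convexOn_of_hasDerivWithinAt2_nonneg (convex_Ioi 0)
    (f' := fun x ↦ p * x ^ (p - 1)) (f'' := fun x ↦ p * ((p - 1) * x ^ (p - 1 - 1)))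
    (fun x hx ↦ (Real.continuousAt_rpow_const x p (Or.inl hx.out.ne')).continuousWithinAt) ?_ ?_ ?_
    <;> intro x hx <;> rw [interior_Ioi] at hx
  · exact (Real.hasDerivAt_rpow_const (Or.inl hx.out.ne')).hasDerivWithinAt
  · exact ((Real.hasDerivAt_rpow_const (Or.inl hx.out.ne')).const_mul p).hasDerivWithinAt
  · have := Real.rpow_pos_of_pos hx.out (p - 1 - 1)
    have : 0 ≤ p * (p - 1) := by nlinarith
    rw [← mul_assoc]
    positivity

section RpowSecondDiff

variable {r : ℝ}

lemma hasDerivAt_centralSecondDiff_rpow (hr : 1 ≤ r) (x : ℝ) :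
    HasDerivAt (centralSecondDiff (· ^ r)) (centralSecondDiff (fun y ↦ r * y ^ (r - 1)) x) x :=
  .centralSecondDiff (Real.hasDerivAt_rpow_const (Or.inr hr))
    (Real.hasDerivAt_rpow_const (Or.inr hr)) (Real.hasDerivAt_rpow_const (Or.inr hr))

lemma antitoneOn_centralSecondDiff_rpow (hr₁ : 1 ≤ r) (hr₂ : r ≤ 2) :
    AntitoneOn (centralSecondDiff (· ^ r)) (Ici 1) := by
  have hderiv := hasDerivAt_centralSecondDiff_rpow hr₁
  refine antitoneOn_of_hasDerivWithinAt_nonpos (convex_Ici 1)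
    (fun x _ ↦ (hderiv x).continuousAt.continuousWithinAt)
    (fun x _ ↦ (hderiv x).hasDerivWithinAt) fun x hx ↦ ?_
  rw [interior_Ici] at hx
  have hconc : ConcaveOn ℝ (Ici 0) fun y : ℝ ↦ r * y ^ (r - 1) :=
    (Real.concaveOn_rpow (by linarith) (by linarith)).smul (by linarith)
  exact hconc.centralSecondDiff_nonpos (by simp; linarith [hx.out]) (by simp; linarith [hx.out])

lemma convexOn_centralSecondDiff_rpow (hr₁ : 1 ≤ r) (hr₂ : r ≤ 2) :
    ConvexOn ℝ (Ici 1) (centralSecondDiff (· ^ r)) := by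
  have hderiv := hasDerivAt_centralSecondDiff_rpow hr₁
  have hderiv2 : ∀ y : ℝ, 0 < y →
      HasDerivAt (fun y ↦ r * y ^ (r - 1)) (r * ((r - 1) * y ^ (r - 1 - 1))) y :=
    fun y hy ↦ (Real.hasDerivAt_rpow_const (Or.inl hy.ne')).const_mul r
  refine convexOn_of_hasDerivWithinAt2_nonneg (convex_Ici 1)
    (f'' := centralSecondDiff fun y ↦ r * ((r - 1) * y ^ (r - 1 - 1)))
    (fun x _ ↦ (hderiv x).continuousAt.continuousWithinAt)
    (fun x _ ↦ (hderiv x).hasDerivWithinAt) (fun x hx ↦ ?_) fun x hx ↦ ?_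
    <;> rw [interior_Ici] at hx
  · exact (HasDerivAt.centralSecondDiff (hderiv2 _ (by linarith [hx.out]))
      (hderiv2 _ (by linarith [hx.out])) (hderiv2 _ (by linarith [hx.out]))).hasDerivWithinAt
  · have : ConvexOn ℝ (Ioi 0) fun y : ℝ ↦ r * ((r - 1) * y ^ (r - 1 - 1)) :=
      ((convexOn_rpow_of_nonpos (by linarith)).smul (by linarith)).smul (by linarith)
    exact this.centralSecondDiff_nonneg (by simp; linarith [hx.out]) (by simp; linarith [hx.out])

end RpowSecondDiff

-- With `r = 3 - ν`, the entries next to the diagonal are `g_{i,i±1} = 7 - 4 * 2 ^ r + 3 ^ r`.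
open Real in
lemma four_mul_two_rpow_sub_three_rpow_le {r : ℝ} (hr : r ≤ 2) : 4 * 2 ^ r - 3 ^ r ≤ (7 : ℝ) := by
  have hderiv : ∀ x : ℝ, HasDerivAt (fun x ↦ 4 * (2 : ℝ) ^ x - 3 ^ x)
      (4 * (2 ^ x * log 2) - 3 ^ x * log 3) x := fun x ↦
    ((hasStrictDerivAt_const_rpow two_pos x).hasDerivAt.const_mul 4).sub
      (hasStrictDerivAt_const_rpow three_pos x).hasDerivAt
  have hmono : MonotoneOn (fun x : ℝ ↦ 4 * (2 : ℝ) ^ x - 3 ^ x) (Iic 2) := by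
    refine monotoneOn_of_hasDerivWithinAt_nonneg (convex_Iic 2)
      (fun x _ ↦ (hderiv x).continuousAt.continuousWithinAt)
      (fun x _ ↦ (hderiv x).hasDerivWithinAt) fun x hx ↦ ?_
    rw [interior_Iic] at hx
    have hsplit : (3 : ℝ) ^ x = 2 ^ x * (3 / 2) ^ x := by
      rw [← mul_rpow (by norm_num) (by norm_num)]; norm_num
    have hbase : ((3 : ℝ) / 2) ^ x ≤ 9 / 4 := by
      calc ((3 : ℝ) / 2) ^ x ≤ (3 / 2) ^ (2 : ℝ) :=
            rpow_le_rpow_of_exponent_le (by norm_num) hx.out.le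
        _ = 9 / 4 := by norm_num [rpow_two]
    have hlog : 9 / 4 * log 3 ≤ 4 * log 2 := by
      have h := log_le_log (by norm_num) (by norm_num : (3 : ℝ) ^ 9 ≤ 2 ^ 16)
      rw [log_pow, log_pow] at h
      push_cast at h
      linarith
    have h2x : 0 < (2 : ℝ) ^ x := rpow_pos_of_pos two_pos x
    have hlog3 : 0 ≤ log 3 := log_nonneg (by norm_num)
    rw [hsplit]
    nlinarith [mul_le_mul_of_nonneg_right hbase hlog3]
  have h := hmono (show r ∈ Iic 2 from hr) (mem_Iic.2 le_rfl) hr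
  norm_num [rpow_two] at h
  linarith

/-- `a^ν_{j,m} = w (j - m)` for `1 ≤ m ≤ j` and `b^ν_{j,m} = w (m - j)` for `j ≤ m ≤ N - 1`;
extending `w` by `0` to negative indices makes `p^ν` and `q^ν` plain second differences of `w`. -/
noncomputable def rieszWeight (ν : ℝ) (t : ℤ) : ℝ :=
  if t < 0 then 0 else if t = 0 then 1 else centralSecondDiff (· ^ (3 - ν)) (t : ℝ)

section RieszWeight

variable {ν : ℝ} {t : ℤ}

lemma rieszWeight_of_neg (ht : t < 0) : rieszWeight ν t = 0 := if_pos ht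

@[simp] lemma rieszWeight_zero : rieszWeight ν 0 = 1 := rfl

lemma rieszWeight_of_pos (ht : 0 < t) :
    rieszWeight ν t = centralSecondDiff (· ^ (3 - ν)) (t : ℝ) := by
  rw [rieszWeight, if_neg (by omega), if_neg (by omega)]

lemma rieszWeight_one_le_two (hν₁ : 1 ≤ ν) (hν₂ : ν ≤ 2) : rieszWeight ν 1 ≤ 2 := by
  have h := Real.rpow_le_rpow_of_exponent_le (by norm_num : (1 : ℝ) ≤ 2) (by linarith : 3 - ν ≤ 2)
  rw [rieszWeight_of_pos one_pos, centralSecondDiff]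
  norm_num [Real.zero_rpow (by linarith : 3 - ν ≠ 0)] at h ⊢
  linarith

lemma rieszWeight_succ_le (hν₁ : 1 ≤ ν) (hν₂ : ν ≤ 2) (ht : 1 ≤ t) :
    rieszWeight ν (t + 1) ≤ rieszWeight ν t := by
  have ht' : (1 : ℝ) ≤ t := by exact_mod_cast ht
  rw [rieszWeight_of_pos (by omega), rieszWeight_of_pos (by omega), Int.cast_add, Int.cast_one]
  exact antitoneOn_centralSecondDiff_rpow (by linarith) (by linarith) ht' (by simp; linarith)
    (by linarith)

lemma centralSecondDiff_rieszWeight_nonneg (hν₁ : 1 ≤ ν) (hν₂ : ν ≤ 2) (ht : 2 ≤ t) :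
    0 ≤ centralSecondDiff (rieszWeight ν) t := by
  have ht' : (2 : ℝ) ≤ t := by exact_mod_cast ht
  have h := (convexOn_centralSecondDiff_rpow (r := 3 - ν) (by linarith) (by linarith)
    ).centralSecondDiff_nonneg (x := t) (by simp; linarith) (by simp; linarith)
  rw [centralSecondDiff, rieszWeight_of_pos (by omega), rieszWeight_of_pos (by omega),
    rieszWeight_of_pos (by omega)]
  push_cast
  exact h

lemma centralSecondDiff_rieszWeight_of_le (ht : t ≤ -2) :
    centralSecondDiff (rieszWeight ν) t = 0 := by
  simp [centralSecondDiff, rieszWeight_of_neg, show t + 1 < 0 by omega, show t < 0 by omega,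
    show t - 1 < 0 by omega]

lemma centralSecondDiff_rieszWeight_one_add_neg_one_nonneg (hν₁ : 1 ≤ ν) (hν₂ : ν ≤ 2) :
    0 ≤ centralSecondDiff (rieszWeight ν) 1 + centralSecondDiff (rieszWeight ν) (-1) := by
  have h := four_mul_two_rpow_sub_three_rpow_le (r := 3 - ν) (by linarith)
  simp [centralSecondDiff, rieszWeight_of_neg, rieszWeight_of_pos]
  norm_num [Real.zero_rpow (by linarith : 3 - ν ≠ 0)]
  linarith

lemma rieszWeight_sub_le (hν₁ : 1 ≤ ν) (hν₂ : ν ≤ 2) (ht : 1 ≤ t) :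
    rieszWeight ν t - rieszWeight ν (t - 1)
      ≤ rieszWeight ν (1 - t) - rieszWeight ν (1 - t - 1) := by
  obtain rfl | ht := ht.eq_or_lt
  · norm_num [rieszWeight_of_neg]
    linarith [rieszWeight_one_le_two hν₁ hν₂]
  · have h := rieszWeight_succ_le hν₁ hν₂ (t := t - 1) (by omega)
    rw [sub_add_cancel] at h
    rw [rieszWeight_of_neg (t := 1 - t) (by omega), rieszWeight_of_neg (t := 1 - t - 1) (by omega)]
    linarith

end RieszWeight

section Coefficients

variable {ν : ℝ} {N i j m : ℕ}

lemma aCoef_eq_rieszWeight (hm : 1 ≤ m) (hmj : m ≤ j) : aCoef ν j m = rieszWeight ν (j - m) := by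
  obtain rfl | hmj := hmj.eq_or_lt
  · simp [aCoef]
  rw [aCoef, if_neg hmj.ne, if_neg (by omega), rieszWeight_of_pos (by omega), centralSecondDiff]
  push_cast
  ring_nf

lemma bCoef_eq_rieszWeight (hjm : j ≤ m) (hmN : m < N) :
    bCoef ν N j m = rieszWeight ν (m - j) := by
  obtain rfl | hjm := hjm.eq_or_lt
  · simp [bCoef]
  rw [bCoef, if_neg hjm.ne', if_neg hmN.ne, rieszWeight_of_pos (by omega), centralSecondDiff]
  push_cast
  ring_nf

lemma pCoef_eq (hm : 1 ≤ m) : pCoef ν i m = centralSecondDiff (rieszWeight ν) (i - m) := by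
  unfold pCoef
  split_ifs with h₁ h₂ h₃
  · rw [aCoef_eq_rieszWeight hm (by omega), aCoef_eq_rieszWeight hm h₁.le,
      aCoef_eq_rieszWeight hm (by omega), centralSecondDiff, Nat.cast_sub (by omega)]
    push_cast
    ring_nf
  · subst h₂
    rw [aCoef_eq_rieszWeight hm le_rfl, aCoef_eq_rieszWeight hm (by omega)]
    simp [centralSecondDiff, rieszWeight_of_neg]
    ring
  · subst h₃
    rw [aCoef_eq_rieszWeight hm le_rfl]
    simp [centralSecondDiff, rieszWeight_of_neg]
  · rw [centralSecondDiff_rieszWeight_of_le (by omega)]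

lemma qCoef_eq (hi : 1 ≤ i) (hmN : m < N) :
    qCoef ν N i m = centralSecondDiff (rieszWeight ν) (m - i) := by
  unfold qCoef
  split_ifs with h₁ h₂ h₃
  · rw [centralSecondDiff_rieszWeight_of_le (by omega)]
  · rw [bCoef_eq_rieszWeight le_rfl (by omega), show (m : ℤ) - i = -1 by omega]
    simp [centralSecondDiff, rieszWeight_of_neg]
  · subst h₃
    rw [bCoef_eq_rieszWeight le_rfl hmN, bCoef_eq_rieszWeight (by omega) hmN, Nat.cast_sub hi]
    simp [centralSecondDiff, rieszWeight_of_neg]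
    ring
  · rw [bCoef_eq_rieszWeight (by omega) hmN, bCoef_eq_rieszWeight (by omega) hmN,
      bCoef_eq_rieszWeight (by omega) hmN, centralSecondDiff, Nat.cast_sub hi]
    push_cast
    ring_nf

lemma gCoef_eq (hi : 1 ≤ i) (hm : 1 ≤ m) (hmN : m < N) :
    gCoef ν N i m
      = centralSecondDiff (rieszWeight ν) (i - m) + centralSecondDiff (rieszWeight ν) (m - i) := by
  rw [gCoef, pCoef_eq hm, qCoef_eq hi hmN]

end Coefficients

section Signs

variable {ν : ℝ} {N i m : ℕ}

lemma gCoef_nonneg (hν₁ : 1 ≤ ν) (hν₂ : ν ≤ 2) (hi : 1 ≤ i) (hm : 1 ≤ m) (hmN : m < N)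
    (hmi : m ≠ i) : 0 ≤ gCoef ν N i m := by
  rw [gCoef_eq hi hm hmN]
  rcases (by omega : (i : ℤ) - m ≤ -2 ∨ (i : ℤ) - m = -1 ∨ (i : ℤ) - m = 1 ∨ 2 ≤ (i : ℤ) - m)
    with h | h | h | h
  · rw [centralSecondDiff_rieszWeight_of_le h, zero_add]
    exact centralSecondDiff_rieszWeight_nonneg hν₁ hν₂ (by omega)
  · rw [h, show (m : ℤ) - i = 1 by omega, add_comm]
    exact centralSecondDiff_rieszWeight_one_add_neg_one_nonneg hν₁ hν₂
  · rw [h, show (m : ℤ) - i = -1 by omega]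
    exact centralSecondDiff_rieszWeight_one_add_neg_one_nonneg hν₁ hν₂
  · rw [centralSecondDiff_rieszWeight_of_le (t := m - i) (by omega), add_zero]
    exact centralSecondDiff_rieszWeight_nonneg hν₁ hν₂ h

lemma sum_gCoef_nonpos (hν₁ : 1 ≤ ν) (hν₂ : ν ≤ 2) (hi : 1 ≤ i) (hiN : i < N) :
    ∑ m ∈ Finset.Ico 1 N, gCoef ν N i m ≤ 0 := by
  set D : ℤ → ℝ := fun t ↦ rieszWeight ν t - rieszWeight ν (t - 1)
  have htele : ∀ m ∈ Finset.Ico 1 N, gCoef ν N i m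
      = (D ((m + 1 : ℕ) - i) - D (i - (m + 1 : ℕ) + 1)) - (D (m - i) - D (i - m + 1)) := by
    intro m hm
    rw [gCoef_eq hi (Finset.mem_Ico.1 hm).1 (Finset.mem_Ico.1 hm).2]
    simp only [D, centralSecondDiff]
    push_cast
    ring_nf
  rw [Finset.sum_congr rfl htele, Finset.sum_Ico_sub (fun m : ℕ ↦ D (m - i) - D (i - m + 1))
    (by omega)]
  have h₁ := rieszWeight_sub_le hν₁ hν₂ (ν := ν) (t := i) (by omega)
  have h₂ := rieszWeight_sub_le hν₁ hν₂ (ν := ν) (t := N - i) (by omega)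
  simp only [D]
  ring_nf at h₁ h₂ ⊢
  linarith

end Signs

lemma abs_sum_gCoef_mul_le {ν : ℝ} {N i : ℕ} (hν₁ : 1 ≤ ν) (hν₂ : ν ≤ 2) (hi : 1 ≤ i)
    (hiN : i < N) {u : ℕ → ℝ} {M : ℝ} (hu₀ : u 0 = 0) (huN : u N = 0)
    (hu : ∀ m ≤ N, |u m| ≤ M) :
    |∑ m ∈ (Finset.range (N + 1)).erase i, gCoef ν N i m * u m| ≤ -gCoef ν N i i * M := by
  have hM : 0 ≤ M := (abs_nonneg _).trans (hu 0 (Nat.zero_le N))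
  have hsub : (Finset.Ico 1 N).erase i ⊆ (Finset.range (N + 1)).erase i :=
    Finset.erase_subset_erase _ fun m hm ↦ by simp at hm ⊢; omega
  have hbdry : ∀ m ∈ (Finset.range (N + 1)).erase i, m ∉ (Finset.Ico 1 N).erase i →
      gCoef ν N i m * u m = 0 := by
    intro m hm hm'
    simp only [Finset.mem_erase, Finset.mem_range, Finset.mem_Ico] at hm hm'
    obtain rfl | rfl : m = 0 ∨ m = N := by omega
    · rw [hu₀, mul_zero]
    · rw [huN, mul_zero]
  rw [← Finset.sum_subset hsub hbdry]
  calc |∑ m ∈ (Finset.Ico 1 N).erase i, gCoef ν N i m * u m|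
      ≤ ∑ m ∈ (Finset.Ico 1 N).erase i, gCoef ν N i m * M := by
        refine (Finset.abs_sum_le_sum_abs _ _).trans (Finset.sum_le_sum fun m hm ↦ ?_)
        simp only [Finset.mem_erase, Finset.mem_Ico] at hm
        have hg := gCoef_nonneg hν₁ hν₂ hi hm.2.1 hm.2.2 hm.1
        rw [abs_mul, abs_of_nonneg hg]
        exact mul_le_mul_of_nonneg_left (hu m (by omega)) hg
    _ = (∑ m ∈ Finset.Ico 1 N, gCoef ν N i m - gCoef ν N i i) * M := by
        rw [← Finset.sum_mul, Finset.sum_erase_eq_sub (Finset.mem_Ico.2 ⟨hi, hiN⟩)]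
    _ ≤ -gCoef ν N i i * M := by
        linarith [mul_nonpos_of_nonpos_of_nonneg (sum_gCoef_nonpos hν₁ hν₂ hi hiN) hM]

lemma abs_sum_antitone_weights_le {l u : ℕ → ℝ} {k : ℕ} {E : ℝ} (hl : Antitone l)
    (hl₀ : l 0 = 1) (hlk : 0 ≤ l k) (hu : ∀ s ≤ k, |u s| ≤ E) :
    |∑ s ∈ Finset.range k, (l s - l (s + 1)) * u (k - s) + l k * u 0| ≤ E := by
  have hterm : ∀ s ∈ Finset.range k, |(l s - l (s + 1)) * u (k - s)| ≤ (l s - l (s + 1)) * E := by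
    intro s _
    have hw : 0 ≤ l s - l (s + 1) := sub_nonneg.2 (hl (Nat.le_succ s))
    rw [abs_mul, abs_of_nonneg hw]
    exact mul_le_mul_of_nonneg_left (hu _ (Nat.sub_le k s)) hw
  calc _ ≤ ∑ s ∈ Finset.range k, |(l s - l (s + 1)) * u (k - s)| + |l k * u 0| :=
        (abs_add_le _ _).trans (add_le_add_left (Finset.abs_sum_le_sum_abs _ _) _)
    _ ≤ ∑ s ∈ Finset.range k, (l s - l (s + 1)) * E + l k * E := by
        gcongr with s hs
        · exact hterm s hs
        · rw [abs_mul, abs_of_nonneg hlk]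
          exact mul_le_mul_of_nonneg_left (hu 0 (Nat.zero_le k)) hlk
    _ = E := by rw [← Finset.sum_mul, Finset.sum_range_sub', hl₀]; ring

section L1

variable {γ : ℝ}

lemma lCoef_zero (hγ : γ < 1) : lCoef γ 0 = 1 := by
  simp [lCoef, Real.zero_rpow (by linarith : 1 - γ ≠ 0)]

lemma lCoef_nonneg (hγ : γ ≤ 1) (s : ℕ) : 0 ≤ lCoef γ s :=
  sub_nonneg.2 (Real.rpow_le_rpow (by positivity) (by linarith) (by linarith))

lemma lCoef_antitone (hγ₀ : 0 ≤ γ) (hγ₁ : γ ≤ 1) : Antitone (lCoef γ) := by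
  refine antitone_nat_of_succ_le fun s ↦ ?_
  have h := (Real.concaveOn_rpow (p := 1 - γ) (by linarith) (by linarith)
    ).centralSecondDiff_nonpos (x := s + 1) (by simp) (by simp; positivity)
  simp only [centralSecondDiff, add_sub_cancel_right] at h
  simp only [lCoef]
  push_cast
  linarith

end L1

lemma kappa_neg {ν : ℝ} (hν₁ : 1 < ν) (hν₂ : ν < 3) : kappa ν < 0 := by
  have hcos : Real.cos (ν * Real.pi / 2) < 0 :=
    Real.cos_neg_of_pi_div_two_lt_of_lt (by nlinarith [Real.pi_pos]) (by nlinarith [Real.pi_pos])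
  rw [kappa]
  exact div_neg_of_pos_of_neg one_pos (by linarith)

lemma implicit_weight_nonneg {γ ν τ Δ c : ℝ} (hγ : γ < 2) (hν₁ : 1 < ν) (hν₂ : ν ≤ 2)
    (hτ : 0 ≤ τ) (hΔ : 0 ≤ Δ) (hc : 0 ≤ c) :
    0 ≤ -(Real.Gamma (2 - γ) * τ ^ γ * kappa ν * c) / (Real.Gamma (4 - ν) * Δ ^ ν) := by
  have hΓ : 0 < Real.Gamma (2 - γ) := Real.Gamma_pos_of_pos (by linarith)
  have hΓ' : 0 < Real.Gamma (4 - ν) := Real.Gamma_pos_of_pos (by linarith)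
  refine div_nonneg (neg_nonneg.2 (mul_nonpos_of_nonpos_of_nonneg ?_ hc)) (by positivity)
  exact mul_nonpos_of_nonneg_of_nonpos (by positivity) (kappa_neg hν₁ (by linarith)).le

lemma abs_le_of_implicit_step {A B gx gy Sx Sy x r M : ℝ} (hA : 0 ≤ A) (hB : 0 ≤ B)
    (hSx : |Sx| ≤ -gx * M) (hSy : |Sy| ≤ -gy * M) (hx : |x| = M)
    (h : (1 - A * gx - B * gy) * x - A * Sx - B * Sy = r) : M ≤ |r| := by
  have hx' : (1 - A * gx - B * gy) * x = r + A * Sx + B * Sy := by linarith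
  have hxM : (1 - A * gx - B * gy) * M ≤ |(1 - A * gx - B * gy) * x| := by
    rw [abs_mul, hx]
    exact mul_le_mul_of_nonneg_right (le_abs_self _) (hx ▸ abs_nonneg x)
  have hrhs := abs_add_three r (A * Sx) (B * Sy)
  rw [← hx', abs_mul A, abs_mul B, abs_of_nonneg hA, abs_of_nonneg hB] at hrhs
  linarith [mul_le_mul_of_nonneg_left hSx hA, mul_le_mul_of_nonneg_left hSy hB]

section MaxAbs2

variable {Nx Ny : ℕ} {v : ℕ → ℕ → ℝ}

lemma abs_le_maxAbs2 {i j : ℕ} (hi : i ≤ Nx) (hj : j ≤ Ny) : |v i j| ≤ maxAbs2 Nx Ny v :=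
  Finset.le_sup' (fun p : ℕ × ℕ ↦ |v p.1 p.2|) (b := (i, j))
    (Finset.mem_product.2 ⟨Finset.mem_range.2 (by omega), Finset.mem_range.2 (by omega)⟩)

lemma exists_maxAbs2_eq : ∃ i ≤ Nx, ∃ j ≤ Ny, maxAbs2 Nx Ny v = |v i j| := by
  obtain ⟨p, hp, hpe⟩ := Finset.exists_mem_eq_sup'
    (Finset.nonempty_range_add_one.product Finset.nonempty_range_add_one)
    (fun p : ℕ × ℕ ↦ |v p.1 p.2|)
  simp only [Finset.mem_product, Finset.mem_range] at hp
  exact ⟨p.1, by omega, p.2, by omega, hpe⟩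

end MaxAbs2

theorem implicit_2d_stable_general (γ α β : ℝ) (hγ : γ ∈ Set.Ioo (0:ℝ) 1)
    (hα : α ∈ Set.Ioc (1:ℝ) 2) (hβ : β ∈ Set.Ioc (1:ℝ) 2)
    (Nx Ny Nt : ℕ)
    (τ Δx Δy : ℝ) (hτ : 0 < τ) (hΔx : 0 < Δx) (hΔy : 0 < Δy)
    (c d : ℕ → ℕ → ℕ → ℝ)
    (hc : ∀ i j k : ℕ, 1 ≤ i → i ≤ Nx - 1 → 1 ≤ j → j ≤ Ny - 1 → 1 ≤ k → k ≤ Nt →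
      0 ≤ c i j k ∧ 0 ≤ d i j k)
    (ω' ω'' : ℕ → ℕ → ℕ → ℝ)
    (hω : ∀ i j k : ℕ, 1 ≤ i → i ≤ Nx - 1 → 1 ≤ j → j ≤ Ny - 1 → 1 ≤ k → k ≤ Nt →
      ω' i j k = -(Real.Gamma (2 - γ) * τ ^ γ * kappa α * c i j k)
          / (Real.Gamma (4 - α) * Δx ^ α) ∧
      ω'' i j k = -(Real.Gamma (2 - γ) * τ ^ γ * kappa β * d i j k)
          / (Real.Gamma (4 - β) * Δy ^ β))
    (ε : ℕ → ℕ → ℕ → ℝ)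
    (hbc : ∀ k i j : ℕ, 1 ≤ k → k ≤ Nt → i ≤ Nx → j ≤ Ny →
      (i = 0 ∨ i = Nx ∨ j = 0 ∨ j = Ny) → ε k i j = 0)
    (hscheme : ∀ i j k : ℕ, 1 ≤ i → i ≤ Nx - 1 → 1 ≤ j → j ≤ Ny - 1 → k + 1 ≤ Nt →
      (1 - ω' i j (k + 1) * gCoef α Nx i i - ω'' i j (k + 1) * gCoef β Ny j j)
          * ε (k + 1) i j
        - ω' i j (k + 1)
          * ∑ m ∈ (Finset.range (Nx + 1)).erase i, gCoef α Nx i m * ε (k + 1) m j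
        - ω'' i j (k + 1)
          * ∑ m ∈ (Finset.range (Ny + 1)).erase j, gCoef β Ny j m * ε (k + 1) i m
      = (∑ s ∈ Finset.range k, (lCoef γ s - lCoef γ (s + 1)) * ε (k - s) i j)
        + lCoef γ k * ε 0 i j) :
    ∀ k : ℕ, k ≤ Nt → maxAbs2 Nx Ny (ε k) ≤ maxAbs2 Nx Ny (ε 0) := by
  obtain ⟨hγ₀, hγ₁⟩ := hγ
  intro k
  induction k using Nat.strong_induction_on with
  | _ k ih =>
  intro hk
  rcases k with _ | k
  · exact le_rfl
  obtain ⟨i, hi, j, hj, hmax⟩ := exists_maxAbs2_eq (Nx := Nx) (Ny := Ny) (v := ε (k + 1))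
  by_cases hbdry : i = 0 ∨ i = Nx ∨ j = 0 ∨ j = Ny
  · rw [hmax, hbc (k + 1) i j (by omega) hk hi hj hbdry, abs_zero]
    exact (abs_nonneg _).trans (abs_le_maxAbs2 (Nat.zero_le Nx) (Nat.zero_le Ny))
  obtain ⟨hi₁, hi₂, hj₁, hj₂⟩ : 1 ≤ i ∧ i ≤ Nx - 1 ∧ 1 ≤ j ∧ j ≤ Ny - 1 := by omega
  obtain ⟨hω', hω''⟩ := hω i j (k + 1) hi₁ hi₂ hj₁ hj₂ (by omega) hk
  obtain ⟨hc', hd'⟩ := hc i j (k + 1) hi₁ hi₂ hj₁ hj₂ (by omega) hk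
  refine (abs_le_of_implicit_step ?_ ?_ ?_ ?_ hmax.symm
    (hscheme i j k hi₁ hi₂ hj₁ hj₂ hk)).trans ?_
  · exact hω' ▸ implicit_weight_nonneg (by linarith) hα.1 hα.2 hτ.le hΔx.le hc'
  · exact hω'' ▸ implicit_weight_nonneg (by linarith) hβ.1 hβ.2 hτ.le hΔy.le hd'
  · exact abs_sum_gCoef_mul_le hα.1.le hα.2 hi₁ (by omega)
      (hbc _ 0 j (by omega) hk (by omega) hj (by omega))
      (hbc _ Nx j (by omega) hk le_rfl hj (by omega)) fun m hm ↦ abs_le_maxAbs2 hm hj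
  · exact abs_sum_gCoef_mul_le hβ.1.le hβ.2 hj₁ (by omega)
      (hbc _ i 0 (by omega) hk hi (by omega) (by omega))
      (hbc _ i Ny (by omega) hk hi le_rfl (by omega)) fun m hm ↦ abs_le_maxAbs2 hi hm
  · exact abs_sum_antitone_weights_le (lCoef_antitone hγ₀.le hγ₁.le) (lCoef_zero hγ₁)
      (lCoef_nonneg hγ₁.le k) fun s hs ↦ (abs_le_maxAbs2 hi hj).trans (ih s (by omega) (by omega))

/-- Theorem 3.5 (case `0 < γ < 1`): unconditional stability of the two-dimensional
implicit finite difference scheme. Here `ε k i j` denotes `ε^k_{i,j}`. -/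
theorem implicit_2d_stable (γ α β : ℝ) (hγ : γ ∈ Set.Ioo (0:ℝ) 1)
    (hα : α ∈ Set.Ioc (1:ℝ) 2) (hβ : β ∈ Set.Ioc (1:ℝ) 2)
    (Nx Ny Nt : ℕ) (hNx : 2 ≤ Nx) (hNy : 2 ≤ Ny) (hNt : 1 ≤ Nt)
    (τ Δx Δy : ℝ) (hτ : 0 < τ) (hΔx : 0 < Δx) (hΔy : 0 < Δy)
    (c d : ℕ → ℕ → ℕ → ℝ)
    (hc : ∀ i j k : ℕ, 1 ≤ i → i ≤ Nx - 1 → 1 ≤ j → j ≤ Ny - 1 → 1 ≤ k → k ≤ Nt →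
      0 ≤ c i j k ∧ 0 ≤ d i j k)
    (ω' ω'' : ℕ → ℕ → ℕ → ℝ)
    (hω : ∀ i j k : ℕ, 1 ≤ i → i ≤ Nx - 1 → 1 ≤ j → j ≤ Ny - 1 → 1 ≤ k → k ≤ Nt →
      ω' i j k = -(Real.Gamma (2 - γ) * τ ^ γ * kappa α * c i j k)
          / (Real.Gamma (4 - α) * Δx ^ α) ∧
      ω'' i j k = -(Real.Gamma (2 - γ) * τ ^ γ * kappa β * d i j k)
          / (Real.Gamma (4 - β) * Δy ^ β))
    (ε : ℕ → ℕ → ℕ → ℝ)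
    (hbc : ∀ k i j : ℕ, 1 ≤ k → k ≤ Nt → i ≤ Nx → j ≤ Ny →
      (i = 0 ∨ i = Nx ∨ j = 0 ∨ j = Ny) → ε k i j = 0)
    (hscheme : ∀ i j k : ℕ, 1 ≤ i → i ≤ Nx - 1 → 1 ≤ j → j ≤ Ny - 1 → k + 1 ≤ Nt →
      (1 - ω' i j (k + 1) * gCoef α Nx i i - ω'' i j (k + 1) * gCoef β Ny j j)
          * ε (k + 1) i j
        - ω' i j (k + 1)
          * ∑ m ∈ (Finset.range (Nx + 1)).erase i, gCoef α Nx i m * ε (k + 1) m j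
        - ω'' i j (k + 1)
          * ∑ m ∈ (Finset.range (Ny + 1)).erase j, gCoef β Ny j m * ε (k + 1) i m
      = (∑ s ∈ Finset.range k, (lCoef γ s - lCoef γ (s + 1)) * ε (k - s) i j)
        + lCoef γ k * ε 0 i j) :
    ∀ k : ℕ, k ≤ Nt → maxAbs2 Nx Ny (ε k) ≤ maxAbs2 Nx Ny (ε 0) :=
  implicit_2d_stable_general γ α β hγ hα hβ Nx Ny Nt τ Δx Δy hτ hΔx hΔy c d hc ω' ω'' hω ε hbc
    hscheme
end
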